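/- arXiv:2412.13345 — 2 statements merged into one kernel-verified Lean document; each statement's English description precedes it below -/
import Mathlib

section
/- Let G=(V,E) be a connected undirected graph on [n], let P be an all-pairs set of paths for G with vertex congestion at most g, and let L≥2 be an integer with L≤√n and n≥4. Let x∈{1}×[n]^L be good, let v∈[n], and let j∈[L]. Then |T_j| ≤ q_v(x_j)·n^{L−j} + L·g·n^{L−j−1}. -/
open Finset

/-- An all-pairs set of simple paths in `G`, with `P^{u,u}` the trivial path. -/
structure PathSystem {n : ℕ} (G : SimpleGraph (Fin n)) where
  path : ∀ u v : Fin n, G.Walk u v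
  isPath : ∀ u v : Fin n, (path u v).IsPath
  diag : ∀ u : Fin n, path u u = SimpleGraph.Walk.nil

/-- Vertex congestion of a path system: max over vertices of total occurrences. -/
def PathSystem.congestion {n : ℕ} {G : SimpleGraph (Fin n)} (P : PathSystem G) : ℕ :=
  Finset.univ.sup fun w : Fin n =>
    ∑ u : Fin n, ∑ v : Fin n, (P.path u v).support.count w

/-- Support of the `i`-th quasi-segment `P^{x_i, x_{i+1}}` (0-based). -/
def segSupport {n L : ℕ} {G : SimpleGraph (Fin n)} (P : PathSystem G)
    (x : Fin (L + 1) → Fin n) (i : ℕ) : List (Fin n) :=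
  (P.path (x ⟨min i L, by omega⟩) (x ⟨min (i + 1) L, by omega⟩)).support

/-- Support of the staircase walk `P^{x_j,x_{j+1}} ∘ ⋯ ∘ P^{x_{L-1},x_L}` (0-based `j`). -/
def stairSupportFrom {n L : ℕ} {G : SimpleGraph (Fin n)} (P : PathSystem G)
    (x : Fin (L + 1) → Fin n) (j : ℕ) : List (Fin n) :=
  x ⟨min j L, by omega⟩ ::
    (List.ofFn fun k : Fin (L - j) =>
      (P.path (x ⟨j + k, by have := k.isLt; omega⟩)
              (x ⟨j + k + 1, by have := k.isLt; omega⟩)).support.tail).flatten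

/-- `Tail(j, S_x)` (0-based `j`): the staircase from `x_j` with the first occurrence
of `x_j` removed. -/
def tailSupport {n L : ℕ} {G : SimpleGraph (Fin n)} (P : PathSystem G)
    (x : Fin (L + 1) → Fin n) (j : ℕ) : List (Fin n) :=
  (stairSupportFrom P x j).erase (x ⟨min j L, by omega⟩)

/-- Largest 0-based index `i` such that the prefixes `x_0 … x_i` and `y_0 … y_i` agree
(`J_{x,y} - 1` in 1-based notation). -/
def J0 {n L : ℕ} (x y : Fin (L + 1) → Fin n) : ℕ :=
  (Finset.univ.filter fun i : Fin (L + 1) => ∀ k ≤ i, x k = y k).sup fun i => (i : ℕ)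

/-- `q_v(u)`: the number of paths in `P` starting at `u` that contain `v`. -/
def qcount {n : ℕ} {G : SimpleGraph (Fin n)} (P : PathSystem G) (v u : Fin n) : ℕ :=
  (Finset.univ.filter fun w : Fin n => v ∈ (P.path u w).support).card

/-- Largest 0-based index `i` with `v ∈ P^{x_i,x_{i+1}}`. -/
def maxSegIdx {n L : ℕ} {G : SimpleGraph (Fin n)} (P : PathSystem G)
    (x : Fin (L + 1) → Fin n) (v : Fin n) : ℕ :=
  ((Finset.range L).filter fun i => v ∈ segSupport P x i).sup id

/-- The function `f_x`. -/
noncomputable def fS {n L : ℕ} {G : SimpleGraph (Fin n)} (P : PathSystem G)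
    (x : Fin (L + 1) → Fin n) (v : Fin n) : ℤ :=
  if v ∈ stairSupportFrom P x 0 then
    -(((maxSegIdx P x v : ℤ) + 1) * n) - (((segSupport P x (maxSegIdx P x v)).idxOf v : ℤ) + 1)
  else (G.dist v (x 0) : ℤ)

/-- The function `g_{x,b}`. -/
noncomputable def gS {n L : ℕ} {G : SimpleGraph (Fin n)} (P : PathSystem G)
    (x : Fin (L + 1) → Fin n) (b : ℤ) (v : Fin n) : ℤ × ℤ :=
  if v = x (Fin.last L) then (fS P x v, b) else (fS P x v, -1)

/-- The relation `r*`. -/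
noncomputable def rstar {n L : ℕ} (x y : Fin (L + 1) → Fin n) (b1 b2 : ℤ) : ℝ :=
  if b1 = b2 ∨ ¬ Function.Injective x ∨ ¬ Function.Injective y then 0
  else (n : ℝ) ^ (J0 x y + 1)

/-- The relation `r`. -/
noncomputable def rrel {n L : ℕ} (x y : Fin (L + 1) → Fin n) (b1 b2 : ℤ) : ℝ :=
  if x = y then 0 else rstar x y b1 b2

/-- The relation `r'`. -/
noncomputable def rprime {n L : ℕ} {G : SimpleGraph (Fin n)} (P : PathSystem G) (g : ℕ)
    (x y : Fin (L + 1) → Fin n) (b1 b2 : ℤ) (v : Fin n) : ℝ :=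
  if gS P x b1 v = gS P y b2 v ∨ b1 = b2 then 0
  else if v ∈ tailSupport P x (J0 x y) ∧ v ∉ tailSupport P y (J0 x y) then
    rrel x y b1 b2 * g / (n : ℝ) ^ (1.5 : ℝ)
  else if v ∈ tailSupport P y (J0 x y) ∧ v ∉ tailSupport P x (J0 x y) then
    rrel x y b1 b2 * (n : ℝ) ^ (1.5 : ℝ) / g
  else rrel x y b1 b2

/-- The vertex congestion of the graph `G`. -/
noncomputable def vertexCongestion {n : ℕ} (G : SimpleGraph (Fin n)) : ℕ :=
  sInf {c | ∃ P : PathSystem G, P.congestion = c}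

/-- The number of cut edges `|E(S, V∖S)|`. -/
def cutEdges {n : ℕ} (G : SimpleGraph (Fin n)) [DecidableRel G.Adj]
    (S : Finset (Fin n)) : ℕ :=
  ((S ×ˢ Sᶜ).filter fun p => G.Adj p.1 p.2).card


/-!
Since `J_{x,y} = j` and `y_1 = x_1`, the sequence `y` agrees with `x` up to index `j`, and
`v ∈ Tail(j, S_y)` means that `v` lies on a segment `P^{y_k, y_{k+1}}` with `k ≥ j`. For `k = j`
the segment starts at `x_j`, so `y_{j+1}` is one of `q_v(x_j)` vertices while the `L - j` later
coordinates are free. For each of the `L - j` indices `k > j`, the pair `(y_k, y_{k+1})` is one of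
at most `g` pairs whose path meets `v`, and the other `L - j - 1` free coordinates are arbitrary.
-/

theorem Finset.card_le_card_mul_pow_of_determined {ι α β : Type*} [Fintype ι] [DecidableEq ι]
    [Fintype α] {s : Finset (ι → α)} {t : Finset β} (K : Finset ι) (f : (ι → α) → β)
    (hf : ∀ y ∈ s, f y ∈ t)
    (hdet : ∀ y ∈ s, ∀ z ∈ s, f y = f z → (∀ i ∉ K, y i = z i) → y = z) :
    #s ≤ #t * Fintype.card α ^ (Fintype.card ι - #K) := by
  have hinj : Set.InjOn (fun y => (f y, fun i : {i // i ∉ K} => y i)) s := by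
    intro y hy z hz hyz
    simp only [Prod.mk.injEq] at hyz
    exact hdet y hy z hz hyz.1 fun i hi => congrFun hyz.2 ⟨i, hi⟩
  calc #s ≤ #(t ×ˢ (univ : Finset ({i // i ∉ K} → α))) :=
        card_le_card_of_injOn _ (fun y hy => mem_product.mpr ⟨hf y hy, mem_univ _⟩) hinj
    _ = #t * Fintype.card α ^ (Fintype.card ι - #K) := by
        rw [card_product, card_univ, Fintype.card_fun, Fintype.card_subtype_compl,
          Fintype.card_coe]

theorem PathSystem.card_filter_mem_support_le_congestion {n : ℕ} {G : SimpleGraph (Fin n)}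
    (P : PathSystem G) (v : Fin n) :
    #{p : Fin n × Fin n | v ∈ (P.path p.1 p.2).support} ≤ P.congestion := by
  calc #{p : Fin n × Fin n | v ∈ (P.path p.1 p.2).support}
      ≤ ∑ p : Fin n × Fin n, (P.path p.1 p.2).support.count v := by
        rw [card_filter]
        refine sum_le_sum fun p _ => ?_
        split_ifs with h
        · exact List.count_pos_iff.mpr h
        · exact Nat.zero_le _
    _ = ∑ u, ∑ w, (P.path u w).support.count v := Fintype.sum_prod_type _
    _ ≤ P.congestion :=
        le_sup (f := fun v => ∑ u, ∑ w, (P.path u w).support.count v) (mem_univ v)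

theorem eq_of_le_J0 {n L : ℕ} {x y : Fin (L + 1) → Fin n} (h0 : x 0 = y 0) {i : Fin (L + 1)}
    (hi : (i : ℕ) ≤ J0 x y) : x i = y i := by
  have hne : (univ.filter fun i : Fin (L + 1) => ∀ k ≤ i, x k = y k).Nonempty :=
    ⟨0, mem_filter.mpr ⟨mem_univ _, fun k hk => by rwa [nonpos_iff_eq_zero.mp hk]⟩⟩
  obtain ⟨i₀, hi₀, hsup⟩ := exists_mem_eq_sup _ hne fun i : Fin (L + 1) => (i : ℕ)
  exact (mem_filter.mp hi₀).2 i (by rw [Fin.le_def]; unfold J0 at hi; omega)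

theorem mem_tailSupport_iff {n L : ℕ} {G : SimpleGraph (Fin n)} (P : PathSystem G)
    (y : Fin (L + 1) → Fin n) (v : Fin n) (m : ℕ) :
    v ∈ tailSupport P y m ↔
      ∃ k : Fin L, m ≤ k ∧ v ∈ (P.path (y k.castSucc) (y k.succ)).support.tail := by
  simp only [tailSupport, stairSupportFrom, List.erase_cons_head, List.mem_flatten, List.mem_ofFn]
  constructor
  · rintro ⟨_, ⟨k, rfl⟩, hv⟩
    exact ⟨⟨m + k, by omega⟩, by simp, hv⟩
  · rintro ⟨k, hmk, hv⟩
    refine ⟨_, ⟨⟨k - m, by omega⟩, rfl⟩, ?_⟩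
    convert hv using 5 <;> simp <;> omega

section Staircase

variable {n L : ℕ} {G : SimpleGraph (Fin n)} (P : PathSystem G) (x : Fin (L + 1) → Fin n)
  (v : Fin n) (k₀ : Fin L)

theorem card_agree_first_segment_mem_le :
    #{y : Fin (L + 1) → Fin n | (∀ i ≤ k₀.castSucc, y i = x i) ∧
        v ∈ (P.path (x k₀.castSucc) (y k₀.succ)).support}
      ≤ qcount P v (x k₀.castSucc) * n ^ (L - k₀ - 1) := by
  refine (card_le_card_mul_pow_of_determined (Iic k₀.succ) (fun y => y k₀.succ)
    (t := {w | v ∈ (P.path (x k₀.castSucc) w).support}) (by simp_all) ?_).trans_eq ?_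
  · rintro y hy z hz hyz hoff
    simp only [mem_filter, mem_univ, true_and] at hy hz
    funext i
    by_cases hi : i ∈ Iic k₀.succ
    · rcases (mem_Iic.mp hi).lt_or_eq with hlt | rfl
      · rw [hy.1 i (Fin.le_castSucc_iff.mpr hlt), hz.1 i (Fin.le_castSucc_iff.mpr hlt)]
      · exact hyz
    · exact hoff i hi
  · simp only [Fin.card_Iic, Fin.val_succ, Fintype.card_fin, qcount]
    congr 2
    omega

theorem card_agree_segment_mem_le {k : Fin L} (hk : k₀ < k) :
    #{y : Fin (L + 1) → Fin n | (∀ i ≤ k₀.castSucc, y i = x i) ∧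
        v ∈ (P.path (y k.castSucc) (y k.succ)).support}
      ≤ P.congestion * n ^ (L - k₀ - 2) := by
  have hK : #(Iic k₀.castSucc ∪ {k.castSucc, k.succ}) = k₀ + 3 := by
    rw [card_union_of_disjoint, Fin.card_Iic, card_pair (Fin.castSucc_lt_succ (i := k)).ne]
    · simp
    · simp only [disjoint_left, mem_Iic, mem_insert, mem_singleton, not_or, Fin.le_def]
      intro i hi
      simp only [Fin.ext_iff, Fin.val_castSucc, Fin.val_succ] at hi ⊢
      omega
  refine (card_le_card_mul_pow_of_determined (Iic k₀.castSucc ∪ {k.castSucc, k.succ})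
    (fun y => (y k.castSucc, y k.succ)) (t := {p | v ∈ (P.path p.1 p.2).support})
    (by simp_all) ?_).trans ?_
  · rintro y hy z hz hyz hoff
    simp only [mem_filter, mem_univ, true_and, Prod.mk.injEq] at hy hz hyz
    funext i
    by_cases hi : i ∈ Iic k₀.castSucc ∪ {k.castSucc, k.succ}
    · simp only [mem_union, mem_Iic, mem_insert, mem_singleton] at hi
      rcases hi with hle | rfl | rfl
      · rw [hy.1 i hle, hz.1 i hle]
      · exact hyz.1
      · exact hyz.2
    · exact hoff i hi
  · rw [hK, Fintype.card_fin, Fintype.card_fin, show L + 1 - (k₀ + 3) = L - k₀ - 2 by omega]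
    exact Nat.mul_le_mul_right _ (P.card_filter_mem_support_le_congestion v)

theorem card_agree_mem_tailSupport_le :
    #{y : Fin (L + 1) → Fin n | (∀ i ≤ k₀.castSucc, y i = x i) ∧ v ∈ tailSupport P y k₀}
      ≤ qcount P v (x k₀.castSucc) * n ^ (L - k₀ - 1)
        + (L - k₀ - 1) * (P.congestion * n ^ (L - k₀ - 2)) := by
  set A : Finset (Fin (L + 1) → Fin n) := {y | (∀ i ≤ k₀.castSucc, y i = x i) ∧
    v ∈ (P.path (x k₀.castSucc) (y k₀.succ)).support}
  set B : Fin L → Finset (Fin (L + 1) → Fin n) := fun k => {y | (∀ i ≤ k₀.castSucc, y i = x i) ∧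
    v ∈ (P.path (y k.castSucc) (y k.succ)).support}
  have hsub : ({y | (∀ i ≤ k₀.castSucc, y i = x i) ∧ v ∈ tailSupport P y k₀} : Finset _)
      ⊆ A ∪ (Ioi k₀).biUnion B := by
    intro y hy
    rw [mem_filter_univ, mem_tailSupport_iff] at hy
    obtain ⟨hagree, k, hk₀k, hv⟩ := hy
    replace hv := List.mem_of_mem_tail hv
    rcases (Fin.le_def.mpr hk₀k).lt_or_eq with hlt | rfl
    · exact mem_union_right _
        (mem_biUnion.mpr ⟨k, mem_Ioi.mpr hlt, (mem_filter_univ y).mpr ⟨hagree, hv⟩⟩)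
    · rw [hagree _ le_rfl] at hv
      exact mem_union_left _ ((mem_filter_univ y).mpr ⟨hagree, hv⟩)
  calc _ ≤ #(A ∪ (Ioi k₀).biUnion B) := card_le_card hsub
    _ ≤ #A + ∑ k ∈ Ioi k₀, #(B k) := (card_union_le _ _).trans (add_le_add_right card_biUnion_le _)
    _ ≤ _ := by
      refine add_le_add (card_agree_first_segment_mem_le P x v k₀) ?_
      have h := sum_le_card_nsmul (Ioi k₀) _ _
        fun k hk => card_agree_segment_mem_le P x v k₀ (mem_Ioi.mp hk)
      rwa [Fin.card_Ioi, smul_eq_mul, Nat.sub_right_comm] at h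

end Staircase

theorem natCast_sub_mul_pow_le_mul_zpow {a : ℝ} (ha : 0 ≤ a) {L j : ℕ} (hj : j ≤ L) :
    ((L - j : ℕ) : ℝ) * a ^ (L - j - 1) ≤ L * a ^ ((L : ℤ) - j - 1) := by
  rcases hj.eq_or_lt with rfl | hlt
  · simp only [Nat.sub_self, Nat.cast_zero, zero_mul]
    positivity
  · rw [show (L : ℤ) - j - 1 = ((L - j - 1 : ℕ) : ℤ) by omega, zpow_natCast]
    gcongr
    exact_mod_cast Nat.sub_le L j

theorem stmt1 {n L g : ℕ} (hn : 4 ≤ n)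
    (G : SimpleGraph (Fin n))
    (P : PathSystem G) (hg : P.congestion ≤ g)
    (x : Fin (L + 1) → Fin n) (hx1 : x 0 = ⟨0, by omega⟩)
    (v : Fin n)
    (j : ℕ) (hj1 : 1 ≤ j) (hjL : j ≤ L) :
    ((Finset.univ.filter fun y : Fin (L + 1) → Fin n =>
        y 0 = (⟨0, by omega⟩ : Fin n) ∧ J0 x y = j - 1 ∧ v ∈ tailSupport P y (j - 1)).card : ℝ)
      ≤ (qcount P v (x ⟨j - 1, by omega⟩) : ℝ) * (n : ℝ) ^ ((L : ℤ) - j)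
        + (L : ℝ) * (g : ℝ) * (n : ℝ) ^ ((L : ℤ) - j - 1) := by
  -- the paper's index `j`, counted from 0
  set k₀ : Fin L := ⟨j - 1, by omega⟩
  have hsub : (univ.filter fun y : Fin (L + 1) → Fin n =>
      y 0 = ⟨0, by omega⟩ ∧ J0 x y = j - 1 ∧ v ∈ tailSupport P y (j - 1))
      ⊆ ({y | (∀ i ≤ k₀.castSucc, y i = x i) ∧ v ∈ tailSupport P y k₀} : Finset _) := by
    intro y hy
    rw [mem_filter_univ] at hy ⊢
    obtain ⟨hy0, hJ, hv⟩ := hy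
    exact ⟨fun i hi => (eq_of_le_J0 (hx1.trans hy0.symm) (hJ ▸ Fin.le_def.mp hi)).symm, hv⟩
  have hcount := (card_le_card hsub).trans (card_agree_mem_tailSupport_le P x v k₀)
  have hk₀ : (k₀ : ℕ) = j - 1 := rfl
  rw [show L - k₀ - 1 = L - j by omega, show L - k₀ - 2 = L - j - 1 by omega] at hcount
  calc _ ≤ ((qcount P v (x k₀.castSucc) * n ^ (L - j) + (L - j) * (g * n ^ (L - j - 1)) : ℕ)
        : ℝ) := by
        exact_mod_cast hcount.trans (by gcongr)
    _ ≤ _ := by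
      push_cast
      refine add_le_add (by rw [← Nat.cast_sub hjL, zpow_natCast]; rfl) ?_
      rw [mul_left_comm, mul_comm (L : ℝ), mul_assoc]
      exact mul_le_mul_of_nonneg_left (natCast_sub_mul_pow_le_mul_zpow n.cast_nonneg hjL)
        g.cast_nonneg
end

section
/- Let G be a connected undirected graph on [n], let P be an all-pairs set of paths for G, and let L≥2 be an integer. For every x∈{1}×[n]^L, the vertex x_{L+1} is the unique global minimizer of f_x: f_x(x_{L+1}) < f_x(v) for every vertex v∈[n] with v≠x_{L+1}. -/
/-!
On the staircase, `f_x` lists the vertices in decreasing lexicographic order of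
(index `i` of the last segment containing the vertex, position `j` in that segment): since
segments are simple paths, `j < n`, so segment `i` fills the block `[-(i+2)n, -(i+1)n)`.
The endpoint `x_{L+1}` is the last vertex of the last segment, hence lies below every other
vertex of that segment, below the blocks of the earlier segments (which are `≥ -Ln`), and
below the nonnegative distances assigned off the staircase.
-/

open Finset

namespace SimpleGraph.Walk

variable {V : Type*} [BEq V] [LawfulBEq V] {G : SimpleGraph V} {u v w : V} {p : G.Walk u w}

theorem idxOf_support_lt_length (hv : v ∈ p.support) (hvw : v ≠ w) :
    p.support.idxOf v < p.length := by
  have hlt := List.idxOf_lt_length_of_mem hv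
  rw [length_support] at hlt
  refine lt_of_le_of_ne (Nat.lt_succ_iff.1 hlt) fun h => hvw ?_
  rw [← List.getElem_idxOf (List.idxOf_lt_length_of_mem hv)]
  simp only [h, support_getElem_length]

theorem IsPath.idxOf_support_end (hp : p.IsPath) : p.support.idxOf w = p.length := by
  have := hp.support_nodup.idxOf_getElem p.length (by simp)
  rwa [support_getElem_length] at this

end SimpleGraph.Walk

open SimpleGraph

section
variable {n L : ℕ} {G : SimpleGraph (Fin n)} (P : PathSystem G) (x : Fin (L + 1) → Fin n)

theorem PathSystem.support_path_congr {a a' b b' : Fin n} (ha : a = a') (hb : b = b') :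
    (P.path a b).support = (P.path a' b').support := by
  subst ha hb; rfl

theorem segSupport_of_lt {i : ℕ} (hi : i < L) :
    segSupport P x i = (P.path (x ⟨i, by omega⟩) (x ⟨i + 1, by omega⟩)).support :=
  P.support_path_congr (congrArg x (Fin.ext (min_eq_left hi.le)))
    (congrArg x (Fin.ext (min_eq_left hi)))

theorem segSupport_sub_one (hL : 0 < L) :
    segSupport P x (L - 1) =
      (P.path (x ⟨L - 1, Nat.sub_lt_succ L 1⟩) (x (Fin.last L))).support :=
  P.support_path_congr (congrArg x (Fin.ext (min_eq_left (Nat.sub_le L 1))))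
    (congrArg x (Fin.ext (by simp [Nat.sub_add_cancel hL])))

theorem length_segSupport_le (i : ℕ) : (segSupport P x i).length ≤ n := by
  rw [segSupport, Walk.length_support]
  simpa using (P.isPath _ _).length_lt

theorem mem_stairSupportFrom_zero_iff {v : Fin n} :
    v ∈ stairSupportFrom P x 0 ↔
      v = x 0 ∨ ∃ k : Fin L, v ∈ (P.path (x k.castSucc) (x k.succ)).support.tail := by
  have hseg (k : Fin L) : (P.path (x ⟨0 + k, by omega⟩) (x ⟨0 + k + 1, by omega⟩)).support =
      (P.path (x k.castSucc) (x k.succ)).support :=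
    P.support_path_congr (congrArg x (Fin.ext (zero_add _)))
      (congrArg x (Fin.ext (by simp)))
  simp only [stairSupportFrom, List.mem_cons, List.mem_flatten, List.mem_ofFn,
    exists_exists_eq_and, Nat.zero_min, hseg]
  rfl

theorem apply_mem_stairSupportFrom_zero (i : Fin (L + 1)) : x i ∈ stairSupportFrom P x 0 := by
  induction i using Fin.induction with
  | zero => exact (mem_stairSupportFrom_zero_iff P x).2 (Or.inl rfl)
  | succ k ih =>
    have hend := (P.path (x k.castSucc) (x k.succ)).end_mem_support
    rw [← Walk.cons_tail_support, List.mem_cons] at hend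
    rcases hend with heq | htail
    · exact heq ▸ ih
    · exact (mem_stairSupportFrom_zero_iff P x).2 (Or.inr ⟨k, htail⟩)

theorem exists_mem_segSupport_of_mem_stairSupportFrom_zero (hL : 0 < L) {v : Fin n}
    (hv : v ∈ stairSupportFrom P x 0) : ∃ i < L, v ∈ segSupport P x i := by
  rcases (mem_stairSupportFrom_zero_iff P x).1 hv with rfl | ⟨k, hk⟩
  · exact ⟨0, hL, by rw [segSupport_of_lt P x hL]; exact Walk.start_mem_support _⟩
  · exact ⟨k, k.isLt, by rw [segSupport_of_lt P x k.isLt]; exact List.mem_of_mem_tail hk⟩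

theorem maxSegIdx_lt (hL : 0 < L) (v : Fin n) : maxSegIdx P x v < L :=
  (Finset.sup_lt_iff hL).2 fun _ hi => Finset.mem_range.1 (Finset.mem_filter.1 hi).1

theorem le_maxSegIdx {i : ℕ} (hi : i < L) {v : Fin n} (hv : v ∈ segSupport P x i) :
    i ≤ maxSegIdx P x v :=
  Finset.le_sup (f := id) (Finset.mem_filter.2 ⟨Finset.mem_range.2 hi, hv⟩)

theorem mem_segSupport_maxSegIdx (hL : 0 < L) {v : Fin n} (hv : v ∈ stairSupportFrom P x 0) :
    v ∈ segSupport P x (maxSegIdx P x v) := by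
  obtain ⟨i, hi, hiv⟩ := exists_mem_segSupport_of_mem_stairSupportFrom_zero P x hL hv
  obtain ⟨j, hj, hje⟩ :=
    Finset.exists_mem_eq_sup ((Finset.range L).filter fun j => v ∈ segSupport P x j)
      ⟨i, Finset.mem_filter.2 ⟨Finset.mem_range.2 hi, hiv⟩⟩ id
  rw [maxSegIdx, hje]
  exact (Finset.mem_filter.1 hj).2

theorem maxSegIdx_last (hL : 0 < L) : maxSegIdx P x (x (Fin.last L)) = L - 1 :=
  le_antisymm (Nat.le_pred_of_lt (maxSegIdx_lt P x hL _))
    (le_maxSegIdx P x (by omega) (by rw [segSupport_sub_one P x hL]; exact Walk.end_mem_support _))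

theorem fS_nonneg_of_notMem {v : Fin n} (hv : v ∉ stairSupportFrom P x 0) : 0 ≤ fS P x v := by
  rw [fS, if_neg hv]
  positivity

theorem neg_mul_le_fS_of_maxSegIdx_lt {v : Fin n} (hv : v ∈ stairSupportFrom P x 0)
    (hi : maxSegIdx P x v + 1 < L) : -(L * n : ℤ) ≤ fS P x v := by
  have hidx := List.idxOf_lt_length_of_mem (mem_segSupport_maxSegIdx P x (by omega) hv)
  have hlen := length_segSupport_le P x (maxSegIdx P x v)
  have hmul : ((maxSegIdx P x v : ℤ) + 2) * n ≤ L * n :=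
    mul_le_mul_of_nonneg_right (by omega) (by positivity)
  rw [fS, if_pos hv]
  linarith

theorem fS_of_maxSegIdx_eq_sub_one (hL : 0 < L) {v : Fin n} (hv : v ∈ stairSupportFrom P x 0)
    (hi : maxSegIdx P x v = L - 1) :
    fS P x v = -(L * n : ℤ) -
      ((P.path (x ⟨L - 1, Nat.sub_lt_succ L 1⟩) (x (Fin.last L))).support.idxOf v + 1) := by
  rw [fS, if_pos hv, hi, segSupport_sub_one P x hL, Nat.cast_pred hL]
  ring

theorem fS_last (hL : 0 < L) :
    fS P x (x (Fin.last L)) = -(L * n : ℤ) -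
      ((P.path (x ⟨L - 1, Nat.sub_lt_succ L 1⟩) (x (Fin.last L))).length + 1) := by
  rw [fS_of_maxSegIdx_eq_sub_one P x hL (apply_mem_stairSupportFrom_zero P x _)
    (maxSegIdx_last P x hL), (P.isPath _ _).idxOf_support_end]

end

theorem stmt9 {n L : ℕ} (hL : 2 ≤ L)
    (G : SimpleGraph (Fin n)) (P : PathSystem G)
    (x : Fin (L + 1) → Fin n) :
    ∀ v : Fin n, v ≠ x (Fin.last L) → fS P x (x (Fin.last L)) < fS P x v := by
  intro v hv
  have hL0 : 0 < L := by omega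
  rw [fS_last P x hL0]
  by_cases hvS : v ∈ stairSupportFrom P x 0
  · obtain hi | hi : maxSegIdx P x v + 1 < L ∨ maxSegIdx P x v = L - 1 := by
      have := maxSegIdx_lt P x hL0 v
      omega
    · linarith [neg_mul_le_fS_of_maxSegIdx_lt P x hvS hi]
    · have hmem := mem_segSupport_maxSegIdx P x hL0 hvS
      rw [hi, segSupport_sub_one P x hL0] at hmem
      have hidx := Walk.idxOf_support_lt_length hmem hv
      rw [fS_of_maxSegIdx_eq_sub_one P x hL0 hvS hi]
      omega
  · have : (0 : ℤ) ≤ L * n := by positivity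
    linarith [fS_nonneg_of_notMem P x hvS]
end
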